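/- arXiv:2310.09808 — 3 statements merged into one kernel-verified Lean document; each statement's English description precedes it below -/
import Mathlib

section
/- Let k ≥ 1 and 0 ≤ j ≤ k-1 be natural numbers, and let ρ be an integer with 1+j ≤ ρ ≤ k-1. Then ∑_{t=j}^{k-1} C(k+ρ-1, t) * ((2k-2-t)! / (k-1-t)!) * C(t,j) * (-1)^t = 0. -/
/-!
Writing `k = m + 1`, the factorial quotient is `m! · C(2m - t, m - t)` and
`C(m + ρ, t) C(t, j) = C(m + ρ, j) C(m + ρ - j, t - j)`, so after the shift `t = j + s` the sum
becomes, up to the factor `± m! C(m + ρ, j)`, the alternating Vandermonde sum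
`∑ₛ (-1)^s C(N, s) C(N + d - s, r - s) = C(d, r)` with `N = m + ρ - j`, `d = m - ρ`, `r = m - j`.
It vanishes because `d < r` exactly when `j < ρ`.
-/

open Finset Nat

theorem alternating_sum_choose_mul_choose (N : ℕ) : ∀ d r : ℕ,
    ∑ s ∈ range (r + 1), (-1 : ℤ) ^ s * N.choose s * (N + d - s).choose (r - s) = d.choose r := by
  induction N with
  | zero => intro d r; simp [sum_range_succ', Nat.choose_zero_succ]
  | succ N ih =>
    rintro d (_ | r)
    · simp
    have pascal : ∀ s ∈ range (r + 1),
        (-1 : ℤ) ^ (s + 1) * (N + 1).choose (s + 1) * (N + 1 + d - (s + 1)).choose (r + 1 - (s + 1))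
          = (-1 : ℤ) ^ (s + 1) * N.choose (s + 1) * (N + (d + 1) - (s + 1)).choose (r + 1 - (s + 1))
            - (-1 : ℤ) ^ s * N.choose s * (N + d - s).choose (r - s) := by
      intro s _
      rw [Nat.choose_succ_succ', show N + 1 + d - (s + 1) = N + d - s by omega,
        show N + (d + 1) - (s + 1) = N + d - s by omega, show r + 1 - (s + 1) = r - s by omega]
      push_cast
      ring
    have shifted := ih (d + 1) (r + 1)
    rw [sum_range_succ', Nat.choose_succ_succ'] at shifted
    rw [sum_range_succ', sum_congr rfl pascal, sum_sub_distrib, ih d r,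
      show N + 1 + d = N + (d + 1) by omega]
    simp only [Nat.choose_zero_right] at shifted ⊢
    push_cast at shifted ⊢
    linarith

theorem choose_mul_factorial_div_mul_choose {m n j t : ℕ} (hjt : j ≤ t) (htm : t ≤ m) :
    (n.choose t : ℤ) * ((2 * m - t)! / (m - t)! : ℕ) * t.choose j
      = m ! * n.choose j * ((n - j).choose (t - j) * (2 * m - t).choose (m - t)) := by
  have hquot : (2 * m - t)! / (m - t)! = m ! * (2 * m - t).choose (m - t) := by
    rw [show m - t = 2 * m - t - m by omega, ← Nat.descFactorial_eq_div (by omega),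
      Nat.descFactorial_eq_factorial_mul_choose, ← Nat.choose_symm (by omega)]
  have hchoose : (n.choose t : ℤ) * t.choose j = n.choose j * (n - j).choose (t - j) := by
    exact_mod_cast Nat.choose_mul hjt
  rw [hquot]
  push_cast
  linear_combination (m ! * (2 * m - t).choose (m - t) : ℤ) * hchoose

theorem sum_Icc_neg_one_pow_mul_choose_mul_choose {m j ρ : ℕ} (hjρ : j < ρ) (hρm : ρ ≤ m) :
    ∑ t ∈ Icc j m, (-1 : ℤ) ^ t * (m + ρ - j).choose (t - j) * (2 * m - t).choose (m - t) = 0 := by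
  rw [← Ico_add_one_right_eq_Icc, sum_Ico_eq_sum_range, show m + 1 - j = m - j + 1 by omega]
  have hshift : ∀ s ∈ range (m - j + 1),
      (-1 : ℤ) ^ (j + s) * (m + ρ - j).choose (j + s - j) * (2 * m - (j + s)).choose (m - (j + s))
        = (-1) ^ j * ((-1) ^ s * (m + ρ - j).choose s
            * (m + ρ - j + (m - ρ) - s).choose (m - j - s)) := by
    intro s _
    rw [show j + s - j = s by omega, show 2 * m - (j + s) = m + ρ - j + (m - ρ) - s by omega,
      show m - (j + s) = m - j - s by omega, pow_add]
    ring
  rw [sum_congr rfl hshift, ← mul_sum, alternating_sum_choose_mul_choose,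
    Nat.choose_eq_zero_of_lt (by omega), Nat.cast_zero, mul_zero]

theorem phi_root_general (k j ρ : ℕ)
    (hρ1 : 1 + j ≤ ρ) (hρ2 : ρ ≤ k - 1) :
    ∑ t ∈ Finset.Icc j (k - 1),
      ((k + ρ - 1).choose t : ℤ) * ((2 * k - 2 - t).factorial / (k - 1 - t).factorial : ℕ)
        * (t.choose j) * (-1) ^ t = 0 := by
  obtain ⟨m, rfl⟩ : ∃ m, k = m + 1 := ⟨k - 1, by omega⟩
  rw [show m + 1 + ρ - 1 = m + ρ by omega, show m + 1 - 1 = m by omega,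
    show 2 * (m + 1) - 2 = 2 * m by omega]
  calc _ = ∑ t ∈ Icc j m, (m ! * (m + ρ).choose j : ℤ)
          * ((-1) ^ t * (m + ρ - j).choose (t - j) * (2 * m - t).choose (m - t)) := by
        refine sum_congr rfl fun t ht => ?_
        obtain ⟨hjt, htm⟩ := mem_Icc.mp ht
        rw [choose_mul_factorial_div_mul_choose hjt htm]
        ring
    _ = 0 := by
        rw [← mul_sum, sum_Icc_neg_one_pow_mul_choose_mul_choose (by omega) (by omega), mul_zero]

theorem phi_root (k j ρ : ℕ) (hk : 1 ≤ k) (hj : j ≤ k - 1)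
    (hρ1 : 1 + j ≤ ρ) (hρ2 : ρ ≤ k - 1) :
    ∑ t ∈ Finset.Icc j (k - 1),
      ((k + ρ - 1).choose t : ℤ) * ((2 * k - 2 - t).factorial / (k - 1 - t).factorial : ℕ)
        * (t.choose j) * (-1) ^ t = 0 :=
  phi_root_general k j ρ hρ1 hρ2
end

section
/- Let k ≥ 1 and 0 ≤ j ≤ k-1. Then for every integer n, ∑_{t=j}^{k-1} C(n-1, t) * ((2k-2-t)! / (k-1-t)!) * C(t,j) * (-1)^t = (-1)^{k-1} * C(k-1, j) * (n-1)_j * (n-(k+1+j))_{k-1-j}, where (x)_m denotes the falling factorial x(x-1)⋯(x-m+1). -/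
/-- generalized binomial coefficient of a rational argument -/
noncomputable def gchoose (x : ℚ) (m : ℕ) : ℚ :=
  (∏ i ∈ Finset.range m, (x - i)) / m.factorial

/-- falling factorial of a rational argument -/
noncomputable def fallingFac (x : ℚ) (m : ℕ) : ℚ :=
  ∏ i ∈ Finset.range m, (x - i)

/-!
Put `x = n - 1`, `k - 1 = j + m` and `t = j + s`, `u = m - s`. Since
`C(x, t) C(t, j) = C(x, j) C(x - j, s)` and
`(2k - 2 - t)! / (k - 1 - t)! = (j + m)! C(j + m + u, u)`, the sum equals
`(-1)^(j+m) (j + m)! C(x, j) ∑_{s+u=m} C(x - j, s) (-1)^u C(j + m + u, u)`.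
As `(-1)^u C(a + u, u) = C(-(a + 1), u)`, the last sum is `C(x - j - (j + m + 1), m)` by
Chu–Vandermonde, and expanding the binomials into falling factorials gives the closed form.
-/

open Polynomial Finset

theorem Nat.factorial_add_div_factorial (a u : ℕ) :
    (a + u).factorial / u.factorial = (a + u).choose u * a.factorial :=
  Nat.div_eq_of_eq_mul_left u.factorial_pos (Nat.add_choose_mul_factorial_mul_factorial a u).symm

theorem Finset.sum_Icc_add_eq_sum_antidiagonal {M : Type*} [AddCommMonoid M] (f : ℕ → M)
    (j m : ℕ) : ∑ t ∈ Icc j (j + m), f t = ∑ p ∈ antidiagonal m, f (j + p.1) := by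
  rw [Nat.sum_antidiagonal_eq_sum_range_succ (fun s _ => f (j + s)), ← Ico_add_one_right_eq_Icc,
    sum_Ico_eq_sum_range, show j + m + 1 - j = m.succ by omega]

theorem Ring.choose_sub_natCast_add_one {R : Type*} [Ring R] [BinomialRing R] (y : R)
    (a m : ℕ) :
    Ring.choose (y - (a + 1)) m =
      ∑ p ∈ antidiagonal m, Ring.choose y p.1 * ((-1) ^ p.2 * ((a + p.2).choose p.2 : R)) := by
  have hcomm : Commute y (-((a : R) + 1)) :=
    ((Nat.cast_commute a y).symm.add_right (Commute.one_right y)).neg_right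
  rw [sub_eq_add_neg, Ring.add_choose_eq m hcomm]
  refine sum_congr rfl fun p _ => ?_
  rw [Ring.choose_neg, show (a : R) + 1 + p.2 - 1 = (a + p.2 : ℕ) by push_cast; abel,
    Ring.choose_natCast, Units.smul_def, Int.coe_negOnePow_natCast, zsmul_eq_mul]
  push_cast
  rfl

theorem fallingFac_eq_factorial_mul_choose (x : ℚ) (m : ℕ) :
    fallingFac x m = m.factorial * Ring.choose x m := by
  rw [← nsmul_eq_mul, ← Ring.descPochhammer_eq_factorial_smul_choose, ← aeval_eq_smeval,
    aeval_def, ← eval_map, descPochhammer_map, descPochhammer_eval_eq_prod_range]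
  rfl

theorem gchoose_eq_choose (x : ℚ) (m : ℕ) : gchoose x m = Ring.choose x m := by
  rw [gchoose, ← fallingFac, fallingFac_eq_factorial_mul_choose]
  field_simp

theorem phi_summand_eq {R : Type*} [CommRing R] [BinomialRing R] (x : R) {j m s u : ℕ}
    (h : s + u = m) :
    Ring.choose x (j + s) * ((2 * (j + m + 1) - 2 - (j + s)).factorial /
        (j + m - (j + s)).factorial : ℕ) * ((j + s).choose j) * (-1) ^ (j + s) =
      (-1) ^ (j + m) * (j + m).factorial * Ring.choose x j *
        (Ring.choose (x - j) s * ((-1) ^ u * ((j + m + u).choose u : R))) := by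
  have hfac : ((2 * (j + m + 1) - 2 - (j + s)).factorial / (j + m - (j + s)).factorial)
      = (j + m + u).choose u * (j + m).factorial := by
    rw [← Nat.factorial_add_div_factorial]; congr 2 <;> omega
  have hsplit := Ring.choose_smul_choose x (Nat.le_add_right j s)
  rw [Nat.add_sub_cancel_left, nsmul_eq_mul] at hsplit
  have hsign : (-1 : R) ^ (j + s) = (-1) ^ (j + m) * (-1) ^ u := by
    rw [← h, ← add_assoc, pow_add _ (j + s), mul_assoc, ← pow_add, ← two_mul, pow_mul,
      neg_one_sq, one_pow, mul_one]
  rw [hfac, hsign]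
  push_cast
  linear_combination ((-1) ^ (j + m) * (-1) ^ u * ((j + m + u).choose u : R) *
    (j + m).factorial) * hsplit

theorem phi_closed_form (k j : ℕ) (hk : 1 ≤ k) (hj : j ≤ k - 1) (n : ℤ) :
    ∑ t ∈ Finset.Icc j (k - 1),
      gchoose ((n : ℚ) - 1) t * ((2 * k - 2 - t).factorial / (k - 1 - t).factorial : ℕ)
        * (t.choose j) * (-1) ^ t =
      (-1) ^ (k - 1) * ((k - 1).choose j : ℚ) * fallingFac ((n : ℚ) - 1) j *
        fallingFac ((n : ℚ) - (k + 1 + j)) (k - 1 - j) := by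
  obtain ⟨m, rfl⟩ : ∃ m, k = j + m + 1 := ⟨k - 1 - j, by omega⟩
  set x : ℚ := n - 1
  have harg : (n : ℚ) - ((j + m + 1 : ℕ) + 1 + j) = x - j - ((j + m : ℕ) + 1) := by
    simp only [x]; push_cast; ring
  have hfac : ((j + m).factorial : ℚ) = (j + m).choose j * j.factorial * m.factorial := by
    rw [Nat.choose_symm_add]
    exact_mod_cast (Nat.add_choose_mul_factorial_mul_factorial j m).symm
  rw [Nat.add_sub_cancel, Nat.add_sub_cancel_left, harg, fallingFac_eq_factorial_mul_choose,
    fallingFac_eq_factorial_mul_choose, Ring.choose_sub_natCast_add_one,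
    sum_Icc_add_eq_sum_antidiagonal]
  simp only [gchoose_eq_choose]
  rw [sum_congr rfl fun p hp => phi_summand_eq x (mem_antidiagonal.mp hp), ← mul_sum, hfac]
  ring
end

section
/- Let ξ = r e^{iθ} and η = r e^{-iθ} with r > 0, sin θ ≠ 0, let k ≥ 1, and let n ≥ 2k. Then the (k-1)-st derivative of z^{n-1}/(z-η)^k evaluated at z = ξ equals (k-1)! · r^{n-2k} e^{i(n-1)θ} (-1)^{k-1} (2i sin θ)^{1-2k} · (1/(k-1)!) ∑_{t=0}^{k-1} C(n-1,t) ((2k-2-t)!/(k-1-t)!) (e^{-2iθ} - 1)^t. -/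
/-!
Expand by the Leibniz rule: the `t`-th derivative of `z ^ (n - 1)` is
`(n - 1)(n - 2)⋯(n - t) z ^ (n - 1 - t)` and the `j`-th derivative of `(z - η) ^ (-k)` is
`(-1) ^ j k(k + 1)⋯(k + j - 1) (z - η) ^ (-k - j)`, so for `j = k - 1 - t` the coefficient of the
`t`-th term collapses to `C(n - 1, t) (2k - 2 - t)! / (k - 1 - t)!`. Pulling
`ξ ^ (n - 1) (ξ - η) ^ (1 - 2k)` out of every term leaves `(η / ξ - 1) ^ t`; finally
`ξ - η = 2 i r sin θ` and `η / ξ = e ^ (-2iθ)`.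
-/

open Complex

open Nat in
theorem Nat.choose_mul_factorial_mul_ascFactorial (a t : ℕ) :
    (a + t).choose t * t ! * (a + t + 1).ascFactorial a = (2 * a + t)! / a ! := by
  refine Nat.eq_div_of_mul_eq_left (factorial_ne_zero a) ?_
  have h := choose_mul_factorial_mul_factorial (le_add_left t a)
  rw [Nat.add_sub_cancel] at h
  rw [show 2 * a + t = a + t + a by ring, ← factorial_mul_ascFactorial, ← h]
  ring

open Nat in
theorem Nat.choose_mul_descFactorial_mul_ascFactorial {k t : ℕ} (p : ℕ) (ht : t < k) :
    (k - 1).choose t * p.descFactorial t * k.ascFactorial (k - 1 - t) =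
      p.choose t * ((2 * k - 2 - t)! / (k - 1 - t)!) := by
  obtain ⟨a, rfl⟩ : ∃ a, k = a + t + 1 := ⟨k - 1 - t, by omega⟩
  rw [show a + t + 1 - 1 = a + t by omega, show a + t - t = a by omega,
    show 2 * (a + t + 1) - 2 - t = 2 * a + t by omega, ← choose_mul_factorial_mul_ascFactorial,
    descFactorial_eq_factorial_mul_choose]
  ring

theorem neg_one_pow_mul_pow_mul_sub_zpow_eq_mul_div_sub_one_pow {𝕜 : Type*} [Field 𝕜]
    {ξ η : 𝕜} (hξ : ξ ≠ 0) (hξη : ξ ≠ η) {k p t : ℕ} (htk : t < k) (htp : t ≤ p) :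
    (-1) ^ (k - 1 - t) * ξ ^ (p - t) * (ξ - η) ^ (-((k + (k - 1 - t) : ℕ) : ℤ)) =
      (-1) ^ (k - 1) * ξ ^ p * (ξ - η) ^ ((1 : ℤ) - 2 * k) * (η / ξ - 1) ^ t := by
  obtain ⟨a, rfl⟩ : ∃ a, k = a + t + 1 := ⟨k - 1 - t, by omega⟩
  obtain ⟨q, rfl⟩ : ∃ q, p = q + t := ⟨p - t, by omega⟩
  have hd : ξ - η ≠ 0 := sub_ne_zero.mpr hξη
  have hratio : η / ξ - 1 = (-1) * (ξ - η) / ξ := by field_simp; ring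
  have hsign : ((-1 : 𝕜) ^ t) ^ 2 = 1 := by rw [← pow_mul, pow_mul', neg_one_sq, one_pow]
  rw [show a + t + 1 - 1 - t = a by omega, show q + t - t = q by omega,
    show a + t + 1 - 1 = a + t by omega,
    show -((a + t + 1 + a : ℕ) : ℤ) = -((2 * a + t + 1 : ℕ) : ℤ) by push_cast; ring,
    show (1 : ℤ) - 2 * ((a + t + 1 : ℕ) : ℤ) = -((2 * a + 2 * t + 1 : ℕ) : ℤ) by push_cast; ring,
    zpow_neg, zpow_neg, zpow_natCast, zpow_natCast, hratio, div_pow, mul_pow]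
  field_simp
  linear_combination -(-1) ^ a * ξ ^ (q + t) * (ξ - η) ^ (2 * a + 2 * t + 1) * hsign

section

open Finset Nat

variable {𝕜 : Type*} [NontriviallyNormedField 𝕜]

theorem iteratedDeriv_inv_sub_const_pow (η z : 𝕜) (k j : ℕ) :
    iteratedDeriv j (fun z => ((z - η) ^ k)⁻¹) z =
      (-1) ^ j * k.ascFactorial j * (z - η) ^ (-((k + j : ℕ) : ℤ)) := by
  have hzpow : (fun z : 𝕜 => ((z - η) ^ k)⁻¹) = fun z => (z - η) ^ (-(k : ℤ)) := by
    simp [zpow_neg]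
  have hprod : ∏ i ∈ range j, (((-k : ℤ) : 𝕜) - i) = (-1) ^ j * k.ascFactorial j := by
    have h := prod_neg (s := range j) fun i => ((k + i : ℕ) : 𝕜)
    rw [card_range] at h
    rw [Nat.ascFactorial_eq_prod_range, Nat.cast_prod, ← h]
    exact prod_congr rfl fun i _ => by push_cast; ring
  rw [hzpow, iteratedDeriv_comp_sub_const j (· ^ (-(k : ℤ))), iteratedDeriv_eq_iterate]
  dsimp only
  rw [iter_deriv_zpow, hprod]
  push_cast
  ring_nf

theorem iteratedDeriv_pow_div_sub_pow {η z : 𝕜} (hz : z ≠ η) (p k j : ℕ) :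
    iteratedDeriv j (fun z => z ^ p / (z - η) ^ k) z =
      ∑ t ∈ range (j + 1), ((j.choose t * p.descFactorial t * k.ascFactorial (j - t) : ℕ) : 𝕜) *
        (-1) ^ (j - t) * z ^ (p - t) * (z - η) ^ (-((k + (j - t) : ℕ) : ℤ)) := by
  have hpole : ContDiffAt 𝕜 j (fun z => ((z - η) ^ k)⁻¹) z :=
    (by fun_prop : ContDiffAt 𝕜 j (fun z => (z - η) ^ k) z).inv
      (pow_ne_zero _ (sub_ne_zero.mpr hz))
  simp only [div_eq_mul_inv]
  rw [iteratedDeriv_fun_mul (by fun_prop) hpole]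
  refine sum_congr rfl fun t _ => ?_
  rw [iteratedDeriv_pow, iteratedDeriv_inv_sub_const_pow]
  push_cast
  ring

theorem iteratedDeriv_pred_pow_div_sub_pow {ξ η : 𝕜} (hξ : ξ ≠ 0) (hξη : ξ ≠ η) (p : ℕ)
    {k : ℕ} (hk : 1 ≤ k) :
    iteratedDeriv (k - 1) (fun z => z ^ p / (z - η) ^ k) ξ =
      (-1) ^ (k - 1) * ξ ^ p * (ξ - η) ^ ((1 : ℤ) - 2 * k) *
        ∑ t ∈ range k, (p.choose t : 𝕜) * (((2 * k - 2 - t)! / (k - 1 - t)! : ℕ) : 𝕜) *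
          (η / ξ - 1) ^ t := by
  rw [iteratedDeriv_pow_div_sub_pow hξη, Nat.sub_add_cancel hk, mul_sum]
  refine sum_congr rfl fun t ht => ?_
  have htk := mem_range.mp ht
  rw [choose_mul_descFactorial_mul_ascFactorial p htk]
  rcases le_or_gt t p with htp | hpt
  · rw [Nat.cast_mul]
    linear_combination ((p.choose t : 𝕜) * (((2 * k - 2 - t)! / (k - 1 - t)! : ℕ) : 𝕜)) *
      neg_one_pow_mul_pow_mul_sub_zpow_eq_mul_div_sub_one_pow hξ hξη htk htp
  · simp [choose_eq_zero_of_lt hpt]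

end

theorem iterated_deriv_residue_term
    (r θ : ℝ) (hr : 0 < r) (hθ : Real.sin θ ≠ 0)
    (ξ η : ℂ) (hξ : ξ = r * Complex.exp (θ * Complex.I))
    (hη : η = r * Complex.exp (-(θ : ℂ) * Complex.I))
    (k n : ℕ) (hk : 1 ≤ k) (hn : 2 * k ≤ n) :
    iteratedDeriv (k - 1) (fun z : ℂ => z ^ (n - 1) / (z - η) ^ k) ξ =
      ((k - 1).factorial : ℂ) * (r : ℂ) ^ ((n : ℤ) - 2 * k) *
        Complex.exp (((n : ℂ) - 1) * θ * Complex.I) * (-1) ^ (k - 1) *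
        (2 * Complex.I * Real.sin θ) ^ ((1 : ℤ) - 2 * k) *
        (1 / ((k - 1).factorial : ℂ)) *
        ∑ t ∈ Finset.range k, ((n - 1).choose t : ℂ) *
          (((2 * k - 2 - t).factorial / (k - 1 - t).factorial : ℕ) : ℂ) *
          (Complex.exp (-2 * θ * Complex.I) - 1) ^ t := by
  have hr0 : (r : ℂ) ≠ 0 := ofReal_ne_zero.mpr hr.ne'
  have hS0 : 2 * I * (Real.sin θ : ℂ) ≠ 0 :=
    mul_ne_zero (mul_ne_zero two_ne_zero I_ne_zero) (ofReal_ne_zero.mpr hθ)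
  have hS : 2 * I * (Real.sin θ : ℂ) = exp (θ * I) - exp (-(θ : ℂ) * I) := by
    rw [ofReal_sin, Complex.sin]
    linear_combination (exp (-(θ : ℂ) * I) - exp (θ * I)) * I_sq
  have hξ0 : ξ ≠ 0 := hξ ▸ mul_ne_zero hr0 (exp_ne_zero _)
  have hdiff : ξ - η = r * (2 * I * Real.sin θ) := by rw [hS, hξ, hη]; ring
  have hξη : ξ ≠ η := sub_ne_zero.mp (hdiff ▸ mul_ne_zero hr0 hS0)
  have hratio : η / ξ - 1 = exp (-2 * θ * I) - 1 := by
    rw [hξ, hη, mul_div_mul_left _ _ hr0, ← exp_sub]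
    ring_nf
  have hξpow : ξ ^ (n - 1) = (r : ℂ) ^ ((n : ℤ) - 1) * exp (((n : ℂ) - 1) * θ * I) := by
    rw [hξ, mul_pow, ← exp_nat_mul, ← zpow_natCast, Nat.cast_sub (by omega : 1 ≤ n),
      Nat.cast_sub (by omega : 1 ≤ n)]
    push_cast
    ring_nf
  have hrpow : (r : ℂ) ^ ((n : ℤ) - 2 * k) = r ^ ((n : ℤ) - 1) * r ^ ((1 : ℤ) - 2 * k) := by
    rw [← zpow_add₀ hr0]
    ring_nf
  have hfact : ((k - 1).factorial : ℂ) ≠ 0 :=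
    Nat.cast_ne_zero.mpr (Nat.factorial_ne_zero _)
  rw [iteratedDeriv_pred_pow_div_sub_pow hξ0 hξη (n - 1) hk, hratio, hdiff, hξpow, mul_zpow, hrpow]
  field_simp
end
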